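/- Let G=(V,D,B) be an acyclic mixed graph with mixed components G_1,…,G_k. If G is HTC-identifiable, then every mixed component G_j is HTC-identifiable. Furthermore, G is HTC-infinite-to-one if and only if some mixed component G_j is HTC-infinite-to-one. -/

import Mathlib

open scoped Classical Matrix

/-- A mixed graph `G = (V, D, B)`: a finite vertex set `V`, a set `D` of directed
edges, and a symmetric set `B` of bidirected edges; no self-loops. -/
structure MixedGraph (V : Type*) [Fintype V] [DecidableEq V] where
  D : Finset (V × V)
  B : Finset (V × V)
  B_symm : ∀ v w : V, (v, w) ∈ B → (w, v) ∈ B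
  D_irrefl : ∀ v : V, (v, v) ∉ D
  B_irrefl : ∀ v : V, (v, v) ∉ B

namespace MixedGraph

variable {V : Type*} [Fintype V] [DecidableEq V]

/-- The parents of `v`: nodes `w` with `w → v ∈ D`. -/
def pa (G : MixedGraph V) (v : V) : Finset V :=
  Finset.univ.filter fun w => (w, v) ∈ G.D

/-- The siblings of `v`: nodes `w` with `w ↔ v ∈ B`. -/
def sib (G : MixedGraph V) (v : V) : Finset V :=
  Finset.univ.filter fun w => (w, v) ∈ G.B

/-- A trek: a walk with no colliding arrowheads.  The field `left` lists the nodes of the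
left-hand side from top (head) to source (last); `right` lists the nodes of the right-hand
side from top (head) to target (last); consecutive nodes in each list are joined by directed
edges pointing away from the head.  If `hasBidir` then the two heads are joined by a
bidirected edge, otherwise they coincide (the top node). -/
structure Trek (G : MixedGraph V) where
  left : List V
  right : List V
  left_ne : left ≠ []
  right_ne : right ≠ []
  hasBidir : Bool
  left_chain : left.Chain' fun a b => (a, b) ∈ G.D
  right_chain : right.Chain' fun a b => (a, b) ∈ G.D
  head_cond : if hasBidir then (left.head left_ne, right.head right_ne) ∈ G.B
              else left.head left_ne = right.head right_ne

namespace Trek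

variable {G : MixedGraph V}

/-- The source of a trek. -/
def source (π : G.Trek) : V := π.left.getLast π.left_ne

/-- The target of a trek. -/
def target (π : G.Trek) : V := π.right.getLast π.right_ne

/-- The left-hand side `Left(π)` of a trek, as a set of nodes. -/
def leftSet (π : G.Trek) : Finset V := π.left.toFinset

/-- The right-hand side `Right(π)` of a trek, as a set of nodes. -/
def rightSet (π : G.Trek) : Finset V := π.right.toFinset

/-- A half-trek is a trek whose left-hand side consists of exactly one node. -/
def IsHalfTrek (π : G.Trek) : Prop := π.leftSet.card = 1

/-- The number of directed edges traversed by the trek. -/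
def nEdges (π : G.Trek) : ℕ := (π.left.length - 1) + (π.right.length - 1)

end Trek

/-- `htr v`: the set of nodes `w ∉ {v} ∪ sib(v)` reachable from `v` by a half-trek
containing at least one directed edge. -/
def htr (G : MixedGraph V) (v : V) : Set V :=
  {w | w ≠ v ∧ w ∉ G.sib v ∧
    ∃ π : G.Trek, π.source = v ∧ π.target = w ∧ π.IsHalfTrek ∧ 1 ≤ π.nEdges}

/-- `f` encodes a system of treks from `Y` to `P`: treks with pairwise distinct sources
forming `Y` and pairwise distinct targets forming `P`. -/
def IsTrekSystem (G : MixedGraph V) (Y P : Finset V) (f : V → G.Trek) : Prop :=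
  (∀ y ∈ Y, (f y).source = y) ∧
  (Y.image fun y => (f y).target) = P ∧
  ∀ y ∈ Y, ∀ y' ∈ Y, y ≠ y' → (f y).target ≠ (f y').target

/-- The treks `f y`, `y ∈ Y`, have no sided intersection. -/
def NoSidedIntersection (G : MixedGraph V) (Y : Finset V) (f : V → G.Trek) : Prop :=
  ∀ y ∈ Y, ∀ y' ∈ Y, y ≠ y' →
    Disjoint (f y).leftSet (f y').leftSet ∧ Disjoint (f y).rightSet (f y').rightSet

/-- `Y` satisfies the half-trek criterion with respect to `v`. -/
def SatisfiesHTC (G : MixedGraph V) (v : V) (Y : Finset V) : Prop :=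
  Y.card = (G.pa v).card ∧
  (∀ y ∈ Y, y ≠ v ∧ y ∉ G.sib v) ∧
  ∃ f : V → G.Trek, (∀ y ∈ Y, (f y).IsHalfTrek) ∧
    G.IsTrekSystem Y (G.pa v) f ∧ G.NoSidedIntersection Y f

/-- `Y` satisfies the weak half-trek criterion with respect to `v`. -/
def SatisfiesWeakHTC (G : MixedGraph V) (v : V) (Y : Finset V) : Prop :=
  Y.card = (G.pa v).card ∧
  (∀ y ∈ Y, y ≠ v ∧ y ∉ G.sib v) ∧
  ∃ f : V → G.Trek, (∀ y ∈ Y, y ∈ G.htr v → (f y).IsHalfTrek) ∧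
    G.IsTrekSystem Y (G.pa v) f ∧ G.NoSidedIntersection Y f

/-- `G` is HTC-identifiable. -/
def HTCIdentifiable (G : MixedGraph V) : Prop :=
  ∃ Y : V → Finset V,
    (∀ v, G.SatisfiesHTC v (Y v)) ∧
    ∃ r : V → V → Prop, IsStrictTotalOrder V r ∧
      ∀ v w, w ∈ Y v → w ∈ G.htr v → r w v

/-- `G` is HTC-infinite-to-one. -/
def HTCInfiniteToOne (G : MixedGraph V) : Prop :=
  ∀ Y : V → Finset V,
    (∃ v, ¬ G.SatisfiesHTC v (Y v)) ∨ ∃ v w, v ∈ Y w ∧ w ∈ Y v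

/-- `G` is acyclic: no directed cycle can be formed from the edges in `D`. -/
def Acyclic (G : MixedGraph V) : Prop :=
  ∀ v : V, ¬ Relation.TransGen (fun a b => (a, b) ∈ G.D) v v

/-- `G` is simple: at most one edge between any pair of nodes. -/
def Simple (G : MixedGraph V) : Prop :=
  (∀ e ∈ G.D, e ∉ G.B) ∧ ∀ v w : V, (v, w) ∈ G.D → (w, v) ∉ G.D

/-- `ℝ^D_reg`: real matrices supported on `D` with `I - Λ` invertible. -/
def RDreg (G : MixedGraph V) : Set (Matrix V V ℝ) :=
  {Λ | (∀ v w, (v, w) ∉ G.D → Λ v w = 0) ∧ IsUnit (1 - Λ).det}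

/-- `PD(B)`: positive definite symmetric matrices supported on the diagonal and `B`. -/
def PDB (G : MixedGraph V) : Set (Matrix V V ℝ) :=
  {Ω | Ω.PosDef ∧ ∀ v w, v ≠ w → (v, w) ∉ G.B → Ω v w = 0}

/-- The parameter space `Θ = ℝ^D_reg × PD(B)`. -/
def Theta (G : MixedGraph V) : Set (Matrix V V ℝ × Matrix V V ℝ) :=
  {θ | θ.1 ∈ G.RDreg ∧ θ.2 ∈ G.PDB}

/-- The parametrization `φ(Λ, Ω) = (I-Λ)^{-T} Ω (I-Λ)^{-1}`. -/
noncomputable def phi {R : Type*} [CommRing R] (Λ Ω : Matrix V V R) : Matrix V V R :=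
  ((1 - Λ)⁻¹)ᵀ * Ω * (1 - Λ)⁻¹

/-- Evaluation of a polynomial in the coordinates `λ_vw` (left summand) and `ω_vw`
(right summand) at a parameter point `θ = (Λ, Ω)`. -/
noncomputable def evalParam (θ : Matrix V V ℝ × Matrix V V ℝ)
    (p : MvPolynomial ((V × V) ⊕ (V × V)) ℝ) : ℝ :=
  MvPolynomial.eval (Sum.elim (fun e => θ.1 e.1 e.2) (fun e => θ.2 e.1 e.2)) p

/-- `V₀` is a proper algebraic subset of `Θ`: the intersection with `Θ` of the zero set of a
polynomial in the coordinates that does not vanish identically on `Θ`. -/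
def IsProperAlgebraic (G : MixedGraph V)
    (V₀ : Set (Matrix V V ℝ × Matrix V V ℝ)) : Prop :=
  ∃ p : MvPolynomial ((V × V) ⊕ (V × V)) ℝ,
    (∃ θ ∈ G.Theta, evalParam θ p ≠ 0) ∧
    V₀ = {θ ∈ G.Theta | evalParam θ p = 0}

/-- Evaluation of a polynomial in the entries of a covariance matrix. -/
noncomputable def evalAtCov (S : Matrix V V ℝ) (p : MvPolynomial (V × V) ℝ) : ℝ :=
  MvPolynomial.eval (fun e => S e.1 e.2) p

/-- `G` is rationally identifiable: some rational map `ψ` (each coordinate a quotient of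
polynomials in the entries of the covariance matrix) satisfies `ψ ∘ φ_G = id` off a proper
algebraic subset of `Θ`. -/
def RationallyIdentifiable (G : MixedGraph V) : Prop :=
  ∃ V₀, G.IsProperAlgebraic V₀ ∧
    ∃ p q : ((V × V) ⊕ (V × V)) → MvPolynomial (V × V) ℝ,
      ∀ θ ∈ G.Theta \ V₀,
        (∀ i, evalAtCov (phi θ.1 θ.2) (q i) ≠ 0) ∧
        (∀ v w : V, θ.1 v w * evalAtCov (phi θ.1 θ.2) (q (Sum.inl (v, w)))
            = evalAtCov (phi θ.1 θ.2) (p (Sum.inl (v, w)))) ∧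
        (∀ v w : V, θ.2 v w * evalAtCov (phi θ.1 θ.2) (q (Sum.inr (v, w)))
            = evalAtCov (phi θ.1 θ.2) (p (Sum.inr (v, w))))

/-- `G` is generically identifiable: `φ_G` is injective off a proper algebraic subset. -/
def GenericallyIdentifiable (G : MixedGraph V) : Prop :=
  ∃ V₀, G.IsProperAlgebraic V₀ ∧
    Set.InjOn (fun θ : Matrix V V ℝ × Matrix V V ℝ => phi θ.1 θ.2) (G.Theta \ V₀)

/-- `φ_G` is generically infinite-to-one. -/
def GenInfiniteToOne (G : MixedGraph V) : Prop :=
  ∃ V₀, G.IsProperAlgebraic V₀ ∧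
    ∀ θ ∈ G.Theta \ V₀,
      {θ' ∈ G.Theta | phi θ'.1 θ'.2 = phi θ.1 θ.2}.Infinite

end MixedGraph

namespace MixedGraph

variable {V : Type*} [Fintype V] [DecidableEq V]

/-- Connectivity in the bidirected part `(V, B)`. -/
def bidirConn (G : MixedGraph V) : V → V → Prop :=
  Relation.ReflTransGen fun a b => (a, b) ∈ G.B

/-- The vertex set of the connected component of `c` in the bidirected part. -/
noncomputable def comp (G : MixedGraph V) (c : V) : Finset V :=
  Finset.univ.filter fun w => G.bidirConn c w

/-- `V_j = C_j ∪ ⋃_{v ∈ C_j} pa(v)`. -/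
noncomputable def compV (G : MixedGraph V) (c : V) : Finset V :=
  G.comp c ∪ (G.comp c).biUnion fun v => G.pa v

/-- The mixed component of `G` containing `c`: the mixed graph on `V_j` with directed
edges `D_j = {v → w ∈ D : v ∈ V_j, w ∈ C_j}` and bidirected edges `B_j = B ∩ (C_j × C_j)`. -/
noncomputable def component (G : MixedGraph V) (c : V) :
    MixedGraph {x : V // x ∈ G.compV c} where
  D := Finset.univ.filter fun e : {x : V // x ∈ G.compV c} × {x : V // x ∈ G.compV c} =>
        ((e.1 : V), (e.2 : V)) ∈ G.D ∧ (e.2 : V) ∈ G.comp c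
  B := Finset.univ.filter fun e : {x : V // x ∈ G.compV c} × {x : V // x ∈ G.compV c} =>
        ((e.1 : V), (e.2 : V)) ∈ G.B ∧ (e.1 : V) ∈ G.comp c ∧ (e.2 : V) ∈ G.comp c
  B_symm := by
    intro v w h
    simp only [Finset.mem_filter, Finset.mem_univ, true_and] at h ⊢
    exact ⟨G.B_symm _ _ h.1, h.2.2, h.2.1⟩
  D_irrefl := by
    intro v h
    simp only [Finset.mem_filter, Finset.mem_univ, true_and] at h
    exact G.D_irrefl _ h.1
  B_irrefl := by
    intro v h
    simp only [Finset.mem_filter, Finset.mem_univ, true_and] at h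
    exact G.B_irrefl _ h.1

end MixedGraph

/-!
Cutting each half-trek of a system at the last node of its right side that lies outside the
bidirected component `C_j` of `v` turns an HTC witness for `v` in `G` into one in the mixed
component `G_j`: sources inside `C_j` are kept, and the new sources outside `C_j` are pairwise
distinct because the right sides were disjoint. Conversely, half-trek systems of `G_j` lift to
`G`. Nodes of `V_j ∖ C_j` have no parents in `G_j`, so HTC families of `G` restrict to every
mixed component, which gives the first claim and one half of the second. For the other half,
families of the components are glued; in `G_j` a source outside `C_j` reaches its target along
directed edges only, so a pair `v ∈ Y_w`, `w ∈ Y_v` from different components would close a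
directed cycle.
-/

namespace List

variable {α : Type*}

theorem exists_eq_append_cons_of_exists_not {p : α → Prop} :
    ∀ {l : List α}, (∃ a ∈ l, ¬ p a) → ∃ l₁ a l₂, l = l₁ ++ a :: l₂ ∧ ¬ p a ∧ ∀ b ∈ l₂, p b
  | [], ⟨_, ha, _⟩ => absurd ha not_mem_nil
  | x :: t, h => by
    by_cases ht : ∃ a ∈ t, ¬ p a
    · obtain ⟨l₁, a, l₂, rfl, ha, hl₂⟩ := exists_eq_append_cons_of_exists_not ht
      exact ⟨x :: l₁, a, l₂, rfl, ha, hl₂⟩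
    · push Not at ht
      obtain ⟨a, ha, hpa⟩ := h
      obtain rfl | ha := mem_cons.mp ha
      · exact ⟨[], a, t, rfl, hpa, ht⟩
      · exact absurd (ht a ha) hpa

end List

namespace MixedGraph

variable {V : Type*} [Fintype V] [DecidableEq V] {G : MixedGraph V} {c : V}

lemma mem_pa {v w : V} : w ∈ G.pa v ↔ (w, v) ∈ G.D := by
  simp [pa]

lemma mem_sib {v w : V} : w ∈ G.sib v ↔ (w, v) ∈ G.B := by
  simp [sib]

lemma bidirConn_equivalence (G : MixedGraph V) : Equivalence G.bidirConn := by
  have : Std.Symm fun a b => (a, b) ∈ G.B := ⟨G.B_symm⟩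
  exact ⟨fun _ => .refl, (Relation.ReflTransGen.stdSymm.symm _ _ ·), .trans⟩

lemma mem_comp {w : V} : w ∈ G.comp c ↔ G.bidirConn c w := by
  simp [comp]

lemma mem_comp_of_mem_B {v w : V} (hv : v ∈ G.comp c) (h : (v, w) ∈ G.B) :
    w ∈ G.comp c :=
  mem_comp.mpr ((mem_comp.mp hv).tail h)

lemma mem_compV_of_mem_comp {v : V} (hv : v ∈ G.comp c) : v ∈ G.compV c :=
  Finset.mem_union_left _ hv

lemma mem_compV_of_mem_D {v w : V} (hw : w ∈ G.comp c) (h : (v, w) ∈ G.D) :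
    v ∈ G.compV c :=
  Finset.mem_union_right _ (Finset.mem_biUnion.mpr ⟨w, hw, mem_pa.mpr h⟩)

section Component

variable {v w : {x // x ∈ G.compV c}}

lemma mem_component_D :
    (v, w) ∈ (G.component c).D ↔ ((v : V), (w : V)) ∈ G.D ∧ (w : V) ∈ G.comp c := by
  simp [component]

lemma mem_component_B : (v, w) ∈ (G.component c).B ↔
    ((v : V), (w : V)) ∈ G.B ∧ (v : V) ∈ G.comp c ∧ (w : V) ∈ G.comp c := by
  simp [component]

lemma image_val_pa_component (hw : (w : V) ∈ G.comp c) :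
    ((G.component c).pa w).image Subtype.val = G.pa w := by
  ext u
  simp only [Finset.mem_image, mem_pa, mem_component_D]
  exact ⟨fun ⟨_, h, hu⟩ => hu ▸ h.1, fun h => ⟨⟨u, mem_compV_of_mem_D hw h⟩, ⟨h, hw⟩, rfl⟩⟩

lemma pa_component_eq_empty (hw : (w : V) ∉ G.comp c) : (G.component c).pa w = ∅ :=
  Finset.eq_empty_of_forall_notMem fun _ h => hw (mem_component_D.mp (mem_pa.mp h)).2

end Component

namespace Trek

variable (G) in
def ofPath (l : List V) (hne : l ≠ []) (h : l.IsChain fun a b => (a, b) ∈ G.D) : G.Trek where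
  left := [l.head hne]
  right := l
  left_ne := List.cons_ne_nil _ _
  right_ne := hne
  hasBidir := false
  left_chain := .singleton _
  right_chain := h
  head_cond := rfl

variable (G) in
def refl (v : V) : G.Trek := ofPath G [v] (List.cons_ne_nil _ _) (.singleton v)

section ofPath

variable {l : List V} {hne : l ≠ []} {h : l.IsChain fun a b => (a, b) ∈ G.D}

lemma isHalfTrek_ofPath : (ofPath G l hne h).IsHalfTrek := rfl

@[simp] lemma source_ofPath : (ofPath G l hne h).source = l.head hne := rfl

@[simp] lemma target_ofPath : (ofPath G l hne h).target = l.getLast hne := rfl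

@[simp] lemma rightSet_ofPath : (ofPath G l hne h).rightSet = l.toFinset := rfl

end ofPath

section HalfTrek

variable {π : G.Trek} (hπ : π.IsHalfTrek)
include hπ

lemma left_eq_singleton : π.left = [π.source] := by
  obtain ⟨a, ha⟩ := Finset.card_eq_one.mp hπ
  have hmem : ∀ x ∈ π.left, x = a := fun x hx =>
    Finset.mem_singleton.mp (ha ▸ List.mem_toFinset.mpr hx)
  have hchain := π.left_chain
  rw [show π.source = a from hmem _ (List.getLast_mem π.left_ne)]
  rcases hl : π.left with _ | ⟨x, _ | ⟨y, t⟩⟩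
  · exact absurd hl π.left_ne
  · rw [hmem x (by simp [hl])]
  · rw [hl] at hchain hmem
    have hxy := (List.isChain_cons_cons.mp hchain).1
    rw [hmem x (by simp), hmem y (by simp)] at hxy
    exact absurd hxy (G.D_irrefl a)

lemma leftSet_eq_singleton : π.leftSet = {π.source} := by
  simp [leftSet, left_eq_singleton hπ]

lemma head_left_eq_source : π.left.head π.left_ne = π.source := by
  simp_rw [left_eq_singleton hπ]
  rfl

lemma source_mem_comp (hhead : π.right.head π.right_ne ∈ G.comp c) : π.source ∈ G.comp c := by
  have hhead_cond := π.head_cond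
  rw [head_left_eq_source hπ] at hhead_cond
  split at hhead_cond
  · exact mem_comp_of_mem_B hhead (G.B_symm _ _ hhead_cond)
  · exact hhead_cond ▸ hhead

lemma reflTransGen_source_target (hb : π.hasBidir = false) :
    Relation.ReflTransGen (fun a b => (a, b) ∈ G.D) π.source π.target := by
  have hhead := π.head_cond
  simp only [hb, Bool.false_eq_true, if_false, head_left_eq_source hπ] at hhead
  rw [hhead]
  exact List.relationReflTransGen_of_exists_isChain _ π.right_chain _

end HalfTrek

lemma target_mem_rightSet (π : G.Trek) : π.target ∈ π.rightSet :=
  List.mem_toFinset.mpr (List.getLast_mem _)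

def lift (τ : (G.component c).Trek) : G.Trek where
  left := τ.left.map Subtype.val
  right := τ.right.map Subtype.val
  left_ne := fun h => τ.left_ne (List.map_eq_nil_iff.mp h)
  right_ne := fun h => τ.right_ne (List.map_eq_nil_iff.mp h)
  hasBidir := τ.hasBidir
  left_chain := (List.isChain_map _).mpr (τ.left_chain.imp fun _ _ h => (mem_component_D.mp h).1)
  right_chain := (List.isChain_map _).mpr (τ.right_chain.imp fun _ _ h => (mem_component_D.mp h).1)
  head_cond := by
    have h := τ.head_cond
    rw [List.head_map, List.head_map]
    split at h
    · rw [if_pos ‹_›]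
      exact (mem_component_B.mp h).1
    · rw [if_neg ‹_›]
      exact congrArg Subtype.val h

section lift

variable (τ : (G.component c).Trek)

@[simp] lemma source_lift : τ.lift.source = τ.source := List.getLast_map _

@[simp] lemma target_lift : τ.lift.target = τ.target := List.getLast_map _

lemma leftSet_lift : τ.lift.leftSet = τ.leftSet.image Subtype.val := by
  ext
  simp only [lift, leftSet, List.mem_toFinset, List.mem_map, Finset.mem_image]

lemma rightSet_lift : τ.lift.rightSet = τ.rightSet.image Subtype.val := by
  ext
  simp only [lift, rightSet, List.mem_toFinset, List.mem_map, Finset.mem_image]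

@[simp] lemma isHalfTrek_lift : τ.lift.IsHalfTrek ↔ τ.IsHalfTrek := by
  rw [IsHalfTrek, IsHalfTrek, leftSet_lift, Finset.card_image_of_injective _ Subtype.val_injective]

@[simp] lemma nEdges_lift : τ.lift.nEdges = τ.nEdges := by
  simp only [lift, nEdges, List.length_map]

end lift

lemma exists_lift_eq (π : G.Trek) (hV : ∀ a ∈ π.left ++ π.right, a ∈ G.compV c)
    (hC : ∀ a ∈ π.left.tail ++ π.right.tail, a ∈ G.comp c)
    (hB : π.hasBidir → π.left.head π.left_ne ∈ G.comp c ∧ π.right.head π.right_ne ∈ G.comp c) :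
    ∃ τ : (G.component c).Trek, τ.lift = π := by
  obtain ⟨l, r, hl, hr, b, hlc, hrc, hh⟩ := π
  simp only [List.mem_append] at hV hC hB
  lift l to List {x // x ∈ G.compV c} using fun a ha => hV a (.inl ha)
  lift r to List {x // x ∈ G.compV c} using fun a ha => hV a (.inr ha)
  have chain : ∀ m : List {x // x ∈ G.compV c}, (∀ a ∈ (m.map Subtype.val).tail, a ∈ G.comp c) →
      (m.map Subtype.val).IsChain (fun a b => (a, b) ∈ G.D) →
      m.IsChain fun a b => (a, b) ∈ (G.component c).D := by
    intro m hm hchain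
    refine ((List.isChain_map _).mp hchain).imp_of_mem_tail_imp fun a b _ hb hab => ?_
    exact mem_component_D.mpr ⟨hab, hm _ (List.map_tail ▸ List.mem_map_of_mem hb)⟩
  refine ⟨⟨l, r, fun h => hl (by rw [h]; rfl), fun h => hr (by rw [h]; rfl), b,
    chain l (fun a ha => hC a (.inl ha)) hlc, chain r (fun a ha => hC a (.inr ha)) hrc, ?_⟩, rfl⟩
  simp only [List.head_map] at hh hB
  split at hh
  · rw [if_pos ‹_›]
    exact mem_component_B.mpr ⟨hh, hB ‹_›⟩
  · rw [if_neg ‹_›]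
    exact Subtype.ext hh

/-- A half-trek into `V_j` is cut at the last node of its right side outside `C_j`; if there is
none, it already lies in `G_j`. -/
lemma exists_truncation (π : G.Trek) (hπ : π.IsHalfTrek) (ht : π.target ∈ G.compV c) :
    ∃ τ : (G.component c).Trek, τ.IsHalfTrek ∧ (τ.target : V) = π.target ∧
      τ.rightSet.image Subtype.val ⊆ π.rightSet ∧
      ((τ.source : V) ∈ G.comp c → (τ.source : V) = π.source) ∧
      ((τ.source : V) ∉ G.comp c → (τ.source : V) ∈ π.rightSet) := by
  by_cases hall : ∀ a ∈ π.right, a ∈ G.comp c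
  · have hhead := hall _ (List.head_mem π.right_ne)
    have hsrc := source_mem_comp hπ hhead
    obtain ⟨τ, hτ⟩ := exists_lift_eq (c := c) π
      (by simpa [left_eq_singleton hπ] using
        ⟨mem_compV_of_mem_comp hsrc, fun a ha => mem_compV_of_mem_comp (hall a ha)⟩)
      (by simpa [left_eq_singleton hπ] using fun a ha => hall a (List.mem_of_mem_tail ha))
      (fun _ => ⟨head_left_eq_source hπ ▸ hsrc, hhead⟩)
    have hsrc' : (τ.source : V) = π.source := by rw [← source_lift, hτ]
    refine ⟨τ, ?_, ?_, ?_, fun _ => hsrc', fun h => absurd (hsrc' ▸ hsrc) h⟩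
    · rwa [← isHalfTrek_lift, hτ]
    · rw [← target_lift, hτ]
    · rw [← rightSet_lift, hτ]
  · push Not at hall
    obtain ⟨l₁, r, l₂, hsplit, hr, hl₂⟩ := List.exists_eq_append_cons_of_exists_not hall
    have hsuffix : r :: l₂ <:+ π.right := ⟨l₁, hsplit.symm⟩
    have hr' : r ∈ G.compV c := by
      rcases l₂ with _ | ⟨b, l₂⟩
      · rwa [Trek.target, ← hsuffix.getLast (List.cons_ne_nil _ _)] at ht
      · exact mem_compV_of_mem_D (hl₂ b (by simp))
          (List.isChain_cons_cons.mp (π.right_chain.suffix hsuffix)).1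
    obtain ⟨τ, hτ⟩ := exists_lift_eq (c := c)
      (ofPath G (r :: l₂) (List.cons_ne_nil _ _) (π.right_chain.suffix hsuffix))
      (by simpa [ofPath, hr'] using fun a ha => mem_compV_of_mem_comp (hl₂ a ha))
      (by simpa [ofPath] using hl₂)
      (fun h => absurd h Bool.false_ne_true)
    have hsrc : (τ.source : V) = r := by rw [← source_lift, hτ, source_ofPath, List.head_cons]
    refine ⟨τ, ?_, ?_, ?_, fun h => absurd (hsrc ▸ h) hr, fun _ => ?_⟩
    · rw [← isHalfTrek_lift, hτ]
      exact isHalfTrek_ofPath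
    · rw [← target_lift, hτ, target_ofPath]
      exact hsuffix.getLast _
    · rw [← rightSet_lift, hτ, rightSet_ofPath]
      exact fun a ha => List.mem_toFinset.mpr (hsuffix.subset (List.mem_toFinset.mp ha))
    · exact hsrc ▸ List.mem_toFinset.mpr (hsuffix.subset (List.mem_cons_self))

lemma target_mem_comp (τ : (G.component c).Trek) (hτ : τ.IsHalfTrek) (hE : 1 ≤ τ.nEdges) :
    (τ.target : V) ∈ G.comp c := by
  have hne : τ.right.dropLast ≠ [] := by
    simp only [nEdges, left_eq_singleton hτ, List.length_singleton] at hE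
    rw [← List.length_pos_iff, List.length_dropLast]
    omega
  exact (mem_component_D.mp (τ.right_chain.rel_getLast_dropLast hne)).2

end Trek

lemma mem_htr_of_mem_htr_component {v w : {x // x ∈ G.compV c}} (hv : (v : V) ∈ G.comp c)
    (hw : w ∈ (G.component c).htr v) : (w : V) ∈ G.htr v ∧ (w : V) ∈ G.comp c := by
  obtain ⟨hne, hsib, τ, rfl, rfl, hτ, hE⟩ := hw
  have hwc := τ.target_mem_comp hτ hE
  refine ⟨⟨fun h => hne (Subtype.ext h), fun h => hsib ?_, τ.lift, by simp, by simp,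
    (τ.isHalfTrek_lift).mpr hτ, by simpa using hE⟩, hwc⟩
  exact mem_sib.mpr (mem_component_B.mpr ⟨mem_sib.mp h, hwc, hv⟩)

/-- The left side of a half-trek is its source and its target lies on its right side, so distinct
sources and disjoint right sides already exclude sided intersections and repeated targets. -/
lemma satisfiesHTC_image_source {ι : Type*} {v : V} (I : Finset ι) (τ : ι → G.Trek)
    (hhalf : ∀ i ∈ I, (τ i).IsHalfTrek) (hsrc : Set.InjOn (fun i => (τ i).source) I)
    (hright : (I : Set ι).PairwiseDisjoint fun i => (τ i).rightSet)
    (htgt : I.image (fun i => (τ i).target) = G.pa v)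
    (havoid : ∀ i ∈ I, (τ i).source ≠ v ∧ (τ i).source ∉ G.sib v) :
    G.SatisfiesHTC v (I.image fun i => (τ i).source) := by
  have htgt_inj : Set.InjOn (fun i => (τ i).target) I := fun i hi j hj h => by
    by_contra hij
    refine Finset.disjoint_left.mp (hright hi hj hij) (τ i).target_mem_rightSet ?_
    simp only at h
    rw [h]
    exact (τ j).target_mem_rightSet
  let f : V → G.Trek := Function.extend (fun i : I => (τ i).source) (fun i => τ i) (Trek.refl G)
  have hf : ∀ i ∈ I, f (τ i).source = τ i := fun i hi =>
    Function.Injective.extend_apply (fun i j h => Subtype.ext (hsrc i.2 j.2 h)) _ _ ⟨i, hi⟩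
  refine ⟨?_, Finset.forall_mem_image.mpr havoid, f, Finset.forall_mem_image.mpr fun i hi => ?_,
    ⟨Finset.forall_mem_image.mpr fun i hi => ?_, ?_, Finset.forall_mem_image.mpr fun i hi => ?_⟩,
    Finset.forall_mem_image.mpr fun i hi => Finset.forall_mem_image.mpr fun j hj hne => ?_⟩
  · rw [Finset.card_image_of_injOn hsrc, ← htgt, Finset.card_image_of_injOn htgt_inj]
  · rw [hf i hi]
    exact hhalf i hi
  · rw [hf i hi]
  · rw [Finset.image_image, ← htgt]
    exact Finset.image_congr fun i hi => by simp [hf i hi]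
  · refine Finset.forall_mem_image.mpr fun j hj hne => ?_
    rw [hf i hi, hf j hj]
    exact fun h => hne (by rw [htgt_inj hi hj h])
  · have hij : i ≠ j := fun h => hne (h ▸ rfl)
    rw [hf i hi, hf j hj, Trek.leftSet_eq_singleton (hhalf i hi),
      Trek.leftSet_eq_singleton (hhalf j hj), Finset.disjoint_singleton]
    exact ⟨hne, hright hi hj hij⟩

lemma satisfiesHTC_empty {v : V} (hv : G.pa v = ∅) : G.SatisfiesHTC v ∅ := by
  simpa using satisfiesHTC_image_source (v := v) (∅ : Finset V) (Trek.refl G) (by simp) (by simp)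
    (by simp) (by simp [hv]) (by simp)

lemma SatisfiesHTC.lift_component {x : {x // x ∈ G.compV c}} {Y : Finset {x // x ∈ G.compV c}}
    (hx : (x : V) ∈ G.comp c) (h : (G.component c).SatisfiesHTC x Y) :
    G.SatisfiesHTC x (Y.image Subtype.val) := by
  obtain ⟨-, hY, f, hhalf, ⟨hsrc, himg, -⟩, hnsi⟩ := h
  have hsrc' : ∀ y ∈ Y, (f y).lift.source = y := fun y hy => by rw [Trek.source_lift, hsrc y hy]
  rw [← Finset.image_congr hsrc']
  refine satisfiesHTC_image_source Y (fun y => (f y).lift)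
    (fun y hy => (Trek.isHalfTrek_lift _).mpr (hhalf y hy))
    (fun y hy y' hy' h => Subtype.ext (by simpa only [hsrc' y hy, hsrc' y' hy'] using h))
    (fun y hy y' hy' hne => ?_) ?_ (fun y hy => ?_)
  · simp only [Function.onFun, Trek.rightSet_lift]
    exact (Finset.disjoint_image Subtype.val_injective).mpr (hnsi y hy y' hy' hne).2
  · simp only [Trek.target_lift]
    rw [← image_val_pa_component hx, ← himg, Finset.image_image]
    rfl
  · rw [hsrc' y hy]
    refine ⟨fun h => (hY y hy).1 (Subtype.ext h), fun h => (hY y hy).2 (mem_sib.mpr ?_)⟩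
    have hyx := mem_sib.mp h
    exact mem_component_B.mpr ⟨hyx, mem_comp_of_mem_B hx (G.B_symm _ _ hyx), hx⟩

lemma SatisfiesHTC.exists_component {x : {x // x ∈ G.compV c}} {Y : Finset V}
    (hx : (x : V) ∈ G.comp c) (h : G.SatisfiesHTC x Y) :
    ∃ Y' : Finset {x // x ∈ G.compV c}, (G.component c).SatisfiesHTC x Y' ∧
      ∀ y ∈ Y', (y : V) ∈ G.comp c → (y : V) ∈ Y := by
  obtain ⟨-, hY, f, hhalf, ⟨hsrc, himg, -⟩, hnsi⟩ := h
  have := Nonempty.intro (Trek.refl (G.component c) x)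
  choose! g hg using fun y (hy : y ∈ Y) => (f y).exists_truncation (c := c) (hhalf y hy)
    (mem_compV_of_mem_D hx (mem_pa.mp (himg ▸ Finset.mem_image_of_mem _ hy)))
  have hsrc_comp : ∀ y ∈ Y, ((g y).source : V) ∈ G.comp c → ((g y).source : V) = y :=
    fun y hy h => ((hg y hy).2.2.2.1 h).trans (hsrc y hy)
  refine ⟨Y.image fun y => (g y).source, satisfiesHTC_image_source Y g (fun y hy => (hg y hy).1)
    (fun y hy y' hy' h => ?_) (fun y hy y' hy' hne => ?_) ?_ (fun y hy => ?_), ?_⟩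
  · simp only at h
    by_cases hc : ((g y).source : V) ∈ G.comp c
    · rw [← hsrc_comp y hy hc, ← hsrc_comp y' hy' (h ▸ hc), h]
    · by_contra hne
      refine Finset.disjoint_left.mp (hnsi y hy y' hy' hne).2 ((hg y hy).2.2.2.2 hc) ?_
      rw [h] at hc ⊢
      exact (hg y' hy').2.2.2.2 hc
  · simp only [Function.onFun]
    rw [← Finset.disjoint_image Subtype.val_injective]
    exact (hnsi y hy y' hy' hne).2.mono (hg y hy).2.2.1 (hg y' hy').2.2.1
  · refine Finset.image_injective Subtype.val_injective ?_
    rw [image_val_pa_component hx, ← himg, Finset.image_image]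
    exact Finset.image_congr fun y hy => (hg y hy).2.1
  · by_cases hc : ((g y).source : V) ∈ G.comp c
    · obtain ⟨hne, hsib⟩ := hY y hy
      rw [← hsrc_comp y hy hc] at hne hsib
      exact ⟨fun h => hne (congrArg Subtype.val h),
        fun h => hsib (mem_sib.mpr (mem_component_B.mp (mem_sib.mp h)).1)⟩
    · exact ⟨fun h => hc (h ▸ hx), fun h => hc (mem_component_B.mp (mem_sib.mp h)).2.1⟩
  · simp only [Finset.forall_mem_image]
    intro y hy hc
    rwa [hsrc_comp y hy hc]

lemma SatisfiesHTC.transGen_of_not_mem_comp {x z : {x // x ∈ G.compV c}}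
    {Y : Finset {x // x ∈ G.compV c}} (h : (G.component c).SatisfiesHTC x Y) (hz : z ∈ Y)
    (hzc : (z : V) ∉ G.comp c) : Relation.TransGen (fun a b => (a, b) ∈ G.D) z x := by
  obtain ⟨-, -, f, hhalf, ⟨hsrc, himg, -⟩, -⟩ := h
  have hD := (mem_component_D.mp (mem_pa.mp (himg ▸ Finset.mem_image_of_mem _ hz))).1
  have hb : (f z).hasBidir = false := by
    have hhead := (f z).head_cond
    rw [Trek.head_left_eq_source (hhalf z hz), hsrc z hz] at hhead
    split at hhead
    · exact absurd (mem_component_B.mp hhead).2.1 hzc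
    · exact Bool.eq_false_iff.mpr ‹_›
  have hpath := (f z).lift.reflTransGen_source_target ((Trek.isHalfTrek_lift _).mpr (hhalf z hz)) hb
  rw [Trek.source_lift, Trek.target_lift, hsrc z hz] at hpath
  exact Relation.TransGen.tail' hpath hD

lemma htcInfiniteToOne_iff : G.HTCInfiniteToOne ↔
    ∀ Y : V → Finset V, (∀ v, G.SatisfiesHTC v (Y v)) → ∃ v w, v ∈ Y w ∧ w ∈ Y v := by
  simp only [HTCInfiniteToOne, imp_iff_not_or, not_forall]

lemma exists_component_family {Y : V → Finset V} (hY : ∀ v, G.SatisfiesHTC v (Y v)) (c : V) :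
    ∃ Y' : {x // x ∈ G.compV c} → Finset {x // x ∈ G.compV c},
      (∀ v, (G.component c).SatisfiesHTC v (Y' v)) ∧
      ∀ v, ∀ w ∈ Y' v, (v : V) ∈ G.comp c ∧ ((w : V) ∈ G.comp c → (w : V) ∈ Y v) := by
  have (v : {x // x ∈ G.compV c}) : ∃ Y', (G.component c).SatisfiesHTC v Y' ∧
      ∀ w ∈ Y', (v : V) ∈ G.comp c ∧ ((w : V) ∈ G.comp c → (w : V) ∈ Y v) := by
    by_cases hv : (v : V) ∈ G.comp c
    · obtain ⟨Y', h, hY'⟩ := (hY v).exists_component hv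
      exact ⟨Y', h, fun w hw => ⟨hv, hY' w hw⟩⟩
    · exact ⟨∅, satisfiesHTC_empty (pa_component_eq_empty hv), by simp⟩
  choose Y' h hY' using this
  exact ⟨Y', h, hY'⟩

lemma HTCIdentifiable.component (hG : G.HTCIdentifiable) (c : V) :
    (G.component c).HTCIdentifiable := by
  obtain ⟨Y, hY, r, hr, hord⟩ := hG
  obtain ⟨Y', hY', hsub⟩ := exists_component_family hY c
  refine ⟨Y', hY', Subrel r (· ∈ G.compV c), (Subrel.relEmbedding r _).isStrictTotalOrder,
    fun v w hw hhtr => ?_⟩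
  obtain ⟨hv, hwY⟩ := hsub v w hw
  obtain ⟨hhtr', hwc⟩ := mem_htr_of_mem_htr_component hv hhtr
  exact hord v w (hwY hwc) hhtr'

lemma exists_bidirConn_rep (G : MixedGraph V) :
    ∃ rep : V → V, (∀ v, G.bidirConn (rep v) v) ∧ ∀ v w, G.bidirConn v w → rep v = rep w :=
  let s : Setoid V := ⟨G.bidirConn, G.bidirConn_equivalence⟩
  ⟨fun v => (Quotient.mk s v).out, fun v => Quotient.mk_out (s := s) v,
    fun _ _ h => congrArg Quotient.out (Quotient.sound (s := s) h)⟩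

lemma HTCInfiniteToOne.of_component (hc : (G.component c).HTCInfiniteToOne) :
    G.HTCInfiniteToOne := by
  rw [htcInfiniteToOne_iff] at hc ⊢
  intro Y hY
  obtain ⟨Y', hY', hsub⟩ := exists_component_family hY c
  obtain ⟨v, w, hvw, hwv⟩ := hc Y' hY'
  exact ⟨v, w, (hsub w v hvw).2 (hsub v w hwv).1, (hsub v w hwv).2 (hsub w v hvw).1⟩

lemma HTCInfiniteToOne.exists_component (hacyclic : G.Acyclic) (hG : G.HTCInfiniteToOne) :
    ∃ c, (G.component c).HTCInfiniteToOne := by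
  by_contra! h
  simp only [htcInfiniteToOne_iff, not_forall, not_exists, not_and] at h
  choose Yc hsat hfree using h
  obtain ⟨rep, hrep, hrep_eq⟩ := G.exists_bidirConn_rep
  have hmem (v : V) : v ∈ G.comp (rep v) := mem_comp.mpr (hrep v)
  let Y : V → Finset V :=
    fun v => (Yc (rep v) ⟨v, mem_compV_of_mem_comp (hmem v)⟩).image Subtype.val
  have hpath (v w : V) (hvw : v ∈ Y w) (hconn : ¬ G.bidirConn v w) :
      Relation.TransGen (fun a b => (a, b) ∈ G.D) v w := by
    obtain ⟨v', hv', rfl⟩ := Finset.mem_image.mp hvw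
    refine (hsat _ _).transGen_of_not_mem_comp hv' fun hc => hconn ?_
    exact G.bidirConn_equivalence.trans (G.bidirConn_equivalence.symm (mem_comp.mp hc)) (hrep w)
  rw [htcInfiniteToOne_iff] at hG
  obtain ⟨v, w, hvw, hwv⟩ := hG Y fun v => (hsat _ _).lift_component (hmem v)
  by_cases hconn : G.bidirConn v w
  · obtain ⟨v', hv', rfl⟩ := Finset.mem_image.mp hvw
    have htransport (c : V) (hc : (v' : V) ∈ G.compV c) (h : rep v' = c) :
        w ∈ (Yc c ⟨v', hc⟩).image Subtype.val := by
      subst h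
      exact hwv
    obtain ⟨w', hw', hw'w⟩ := Finset.mem_image.mp (htransport _ v'.2 (hrep_eq _ _ hconn))
    rw [show w' = ⟨w, mem_compV_of_mem_comp (hmem w)⟩ from Subtype.ext hw'w] at hw'
    exact hfree _ _ _ hv' hw'
  · exact hacyclic v ((hpath v w hvw hconn).trans
      (hpath w v hwv fun h => hconn (G.bidirConn_equivalence.symm h)))

end MixedGraph

/-- If an acyclic mixed graph `G` is HTC-identifiable, then all of its mixed components are
HTC-identifiable.  Furthermore, `G` is HTC-infinite-to-one if and only if some mixed
component of `G` is HTC-infinite-to-one. -/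
theorem htc_mixed_components {V : Type*} [Fintype V] [DecidableEq V]
    (G : MixedGraph V) (hacyclic : G.Acyclic) :
    (G.HTCIdentifiable → ∀ c : V, (G.component c).HTCIdentifiable) ∧
    (G.HTCInfiniteToOne ↔ ∃ c : V, (G.component c).HTCInfiniteToOne) :=
  ⟨fun hG c => hG.component c,
    fun hG => hG.exists_component hacyclic, fun ⟨_, hc⟩ => hc.of_component⟩
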